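/- (Theorem 1, probability conservation.) Assume the abstract FDTD-Q region setup, and assume additionally that every eigenvalue μ ∈ spectrum ℝ Σ of the symmetric matrix Σ := (1/ℏ) • (D * H * D), where D := Matrix.diagonal (fun i => 1/Real.sqrt (d i)), satisfies Δt * |μ| < 2 (the generalized CFL condition). Then: (i) P n ≥ 0 for all n : ℕ; and (ii) P (n+1) - P n = -Δt * IP n for all n : ℕ. -/

import Mathlib

/-!
Rescaling by `√d` turns `P n` into `u ⬝ᵥ u + v ⬝ᵥ v - Δt * (v ⬝ᵥ Σ *ᵥ u)`, where `Σ` is the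
symmetric matrix of the CFL condition. Diagonalising `Σ` by an orthogonal matrix splits this
form into planar forms `a² + b² - Δt μ a b`, one per eigenvalue `μ`, and each is nonnegative
because `|Δt μ| ≤ 2`.

The balance law is the energy identity of the leap-frog scheme: pairing the two updates with
`ψR (n+1) + ψR n` and `ψI (n+1) + ψI n` telescopes the `V`-norms, and by the symmetry of `H`
the remaining cross terms assemble into the staggered term `ψI ⬝ᵥ H *ᵥ ψR` of `P`.
-/

open Matrix

theorem mul_self_add_mul_self_sub_mul_mul_nonneg {κ : ℝ} (hκ : |κ| ≤ 2) (a b : ℝ) :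
    0 ≤ a * a + b * b - κ * a * b := by
  obtain ⟨hlo, hhi⟩ := abs_le.mp hκ
  nlinarith [mul_nonneg (sub_nonneg.mpr hhi) (sq_nonneg (a + b)),
    mul_nonneg (neg_le_iff_add_nonneg.mp hlo) (sq_nonneg (a - b))]

namespace Matrix

variable {n : Type*} [Fintype n]

theorem dotProduct_mul_mul_transpose_mulVec (U D : Matrix n n ℝ) (u v : n → ℝ) :
    v ⬝ᵥ (U * D * Uᵀ) *ᵥ u = (Uᵀ *ᵥ v) ⬝ᵥ D *ᵥ (Uᵀ *ᵥ u) := by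
  rw [← mulVec_mulVec, ← mulVec_mulVec, dotProduct_mulVec, ← mulVec_transpose U v]

theorem IsSymm.dotProduct_mulVec_comm {A : Matrix n n ℝ} (hA : A.IsSymm) (x y : n → ℝ) :
    x ⬝ᵥ A *ᵥ y = y ⬝ᵥ A *ᵥ x := by
  rw [dotProduct_mulVec, ← mulVec_transpose, hA.eq, dotProduct_comm]

variable [DecidableEq n]

theorem diagonal_mulVec (e w : n → ℝ) : diagonal e *ᵥ w = e * w :=
  funext (mulVec_diagonal e w)

theorem dotProduct_diagonal_mul_mul_diagonal_mulVec (e : n → ℝ)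
    (A : Matrix n n ℝ) (u v : n → ℝ) :
    v ⬝ᵥ (diagonal e * A * diagonal e) *ᵥ u = (e * v) ⬝ᵥ A *ᵥ (e * u) := by
  rw [← mulVec_mulVec, ← mulVec_mulVec, dotProduct_mulVec, ← mulVec_transpose,
    diagonal_transpose, diagonal_mulVec, diagonal_mulVec]

theorem dotProduct_diagonal_mul_self_mulVec (e x : n → ℝ) :
    x ⬝ᵥ diagonal (e * e) *ᵥ x = (e * x) ⬝ᵥ (e * x) := by
  have h := dotProduct_diagonal_mul_mul_diagonal_mulVec e 1 x x
  rw [Matrix.mul_one, diagonal_mul_diagonal, one_mulVec] at h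
  exact h

theorem IsHermitian.dotProduct_add_dotProduct_sub_mul_nonneg {S : Matrix n n ℝ}
    (hS : S.IsHermitian) {c : ℝ} (hc : 0 ≤ c) (hCFL : ∀ μ ∈ spectrum ℝ S, c * |μ| ≤ 2)
    (u v : n → ℝ) : 0 ≤ u ⬝ᵥ u + v ⬝ᵥ v - c * (v ⬝ᵥ S *ᵥ u) := by
  set U : Matrix n n ℝ := ↑hS.eigenvectorUnitary
  have hU : U * Uᵀ = 1 := by
    simpa [star_eq_conjTranspose] using mem_unitaryGroup_iff.mp hS.eigenvectorUnitary.2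
  have hSU : S = U * diagonal hS.eigenvalues * Uᵀ := by
    simpa [star_eq_conjTranspose] using hS.spectral_theorem
  have hnorm (w : n → ℝ) : w ⬝ᵥ w = (Uᵀ *ᵥ w) ⬝ᵥ (Uᵀ *ᵥ w) := by
    have h := dotProduct_mul_mul_transpose_mulVec U 1 w w
    simpa only [Matrix.mul_one, hU, one_mulVec] using h
  have hcross : v ⬝ᵥ S *ᵥ u = (Uᵀ *ᵥ v) ⬝ᵥ diagonal hS.eigenvalues *ᵥ (Uᵀ *ᵥ u) :=
    (congrArg (fun A => v ⬝ᵥ A *ᵥ u) hSU).trans (dotProduct_mul_mul_transpose_mulVec _ _ u v)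
  rw [hnorm u, hnorm v, hcross]
  set a := Uᵀ *ᵥ u
  set b := Uᵀ *ᵥ v
  have hterm (i : n) : 0 ≤ a i * a i + b i * b i - c * hS.eigenvalues i * a i * b i := by
    refine mul_self_add_mul_self_sub_mul_mul_nonneg ?_ _ _
    rw [abs_mul, abs_of_nonneg hc]
    exact hCFL _ (hS.eigenvalues_mem_spectrum_real i)
  calc 0 ≤ ∑ i, (a i * a i + b i * b i - c * hS.eigenvalues i * a i * b i) :=
        Finset.sum_nonneg fun i _ => hterm i
    _ = a ⬝ᵥ a + b ⬝ᵥ b - c * (b ⬝ᵥ diagonal hS.eigenvalues *ᵥ a) := by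
        simp only [dotProduct, diagonal_mulVec, Pi.mul_apply, Finset.mul_sum,
          ← Finset.sum_add_distrib, ← Finset.sum_sub_distrib]
        exact Finset.sum_congr rfl fun i _ => by ring

end Matrix

namespace FDTDQ

variable {n : Type*} [Fintype n]

noncomputable def probability (ℏ Δt : ℝ) (V H : Matrix n n ℝ) (x y : n → ℝ) : ℝ :=
  x ⬝ᵥ V *ᵥ x + y ⬝ᵥ V *ᵥ y - (Δt / ℏ) * (y ⬝ᵥ H *ᵥ x)

theorem probability_sub_eq {ℏ Δt : ℝ} (hℏ : ℏ ≠ 0) {V H : Matrix n n ℝ} (hV : V.IsSymm)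
    (hH : H.IsSymm) {x₀ x₁ y₀ y₁ sR sI : n → ℝ}
    (hx : ℏ • V *ᵥ (x₁ - x₀) = Δt • (H *ᵥ y₁ - sI))
    (hy : ℏ • V *ᵥ (y₁ - y₀) = Δt • (-(H *ᵥ x₀) + sR)) :
    probability ℏ Δt V H x₁ y₁ - probability ℏ Δt V H x₀ y₀
      = -Δt * ((2 / ℏ) * (((x₁ + x₀) / 2) ⬝ᵥ sI - ((y₁ + y₀) / 2) ⬝ᵥ sR)) := by
  have hx' := congrArg ((x₁ + x₀) ⬝ᵥ ·) hx
  have hy' := congrArg ((y₁ + y₀) ⬝ᵥ ·) hy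
  simp only [dotProduct_smul, smul_eq_mul, mulVec_sub, dotProduct_sub, dotProduct_add,
    dotProduct_neg, add_dotProduct] at hx' hy'
  have hhalf (w z : n → ℝ) : (w / 2) ⬝ᵥ z = (w ⬝ᵥ z) / 2 := by
    simp only [dotProduct, Pi.div_apply, Pi.ofNat_apply, Finset.sum_div, div_mul_eq_mul_div]
  rw [probability, probability, hhalf, hhalf, add_dotProduct, add_dotProduct]
  field_simp
  linear_combination hx' + hy' - ℏ * hV.dotProduct_mulVec_comm x₀ x₁
    - ℏ * hV.dotProduct_mulVec_comm y₀ y₁ + Δt * hH.dotProduct_mulVec_comm x₁ y₁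
    + Δt * hH.dotProduct_mulVec_comm x₀ y₁

theorem probability_nonneg [DecidableEq n] {ℏ Δt : ℝ} (hℏ : 0 < ℏ) (hΔt : 0 ≤ Δt)
    {H : Matrix n n ℝ} (hH : H.IsSymm) {d : n → ℝ} (hd : ∀ i, 0 < d i)
    (hCFL : ∀ μ ∈ spectrum ℝ ((1 / ℏ) • (diagonal (fun i => 1 / √(d i)) * H
      * diagonal (fun i => 1 / √(d i)))), Δt * |μ| ≤ 2)
    (x y : n → ℝ) : 0 ≤ probability ℏ Δt (diagonal d) H x y := by
  set e : n → ℝ := fun i => 1 / √(d i)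
  set s : n → ℝ := fun i => √(d i)
  have hes : e * s = 1 := funext fun i => one_div_mul_cancel (Real.sqrt_pos.mpr (hd i)).ne'
  have hss : s * s = d := funext fun i => Real.mul_self_sqrt (hd i).le
  have hS : ((1 / ℏ) • (diagonal e * H * diagonal e)).IsHermitian := by
    refine IsHermitian.smul ?_ (IsSelfAdjoint.all _)
    simpa [diagonal_conjTranspose] using
      isHermitian_mul_mul_conjTranspose (diagonal e) (isHermitian_iff_isSelfAdjoint.mpr hH)
  have hq := hS.dotProduct_add_dotProduct_sub_mul_nonneg hΔt hCFL (s * x) (s * y)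
  rw [smul_mulVec, dotProduct_smul, dotProduct_diagonal_mul_mul_diagonal_mulVec, ← mul_assoc,
    ← mul_assoc, hes, one_mul, one_mul, smul_eq_mul] at hq
  rw [probability, ← hss, dotProduct_diagonal_mul_self_mulVec,
    dotProduct_diagonal_mul_self_mulVec]
  convert hq using 2
  field_simp

end FDTDQ

theorem fdtdq_probability_conservation
    (N M : ℕ) (ℏ Δt : ℝ) (hℏ : 0 < ℏ) (hΔt : 0 < Δt)
    (H : Matrix (Fin N) (Fin N) ℝ) (hH : Hᵀ = H)
    (Hb : Matrix (Fin N) (Fin M) ℝ)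
    (d : Fin N → ℝ) (hd : ∀ i, 0 < d i)
    (ψR ψI : ℕ → (Fin N → ℝ)) (gR gI : ℕ → (Fin M → ℝ))
    (hUpdA : ∀ n : ℕ, ℏ • (Matrix.diagonal d).mulVec (ψR (n+1) - ψR n)
        = Δt • (H.mulVec (ψI (n+1)) - Hb.mulVec (gI n)))
    (hUpdB : ∀ n : ℕ, ℏ • (Matrix.diagonal d).mulVec (ψI (n+1) - ψI n)
        = Δt • (-(H.mulVec (ψR n)) + Hb.mulVec (gR n)))
    (hCFL : ∀ μ ∈ spectrum ℝ
        ((1/ℏ) • (Matrix.diagonal (fun i => 1 / Real.sqrt (d i)) * H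
          * Matrix.diagonal (fun i => 1 / Real.sqrt (d i)))),
        Δt * |μ| < 2)
    (P : ℕ → ℝ)
    (hP : ∀ n : ℕ, P n = ψR n ⬝ᵥ (Matrix.diagonal d).mulVec (ψR n)
        + ψI n ⬝ᵥ (Matrix.diagonal d).mulVec (ψI n)
        - (Δt/ℏ) * (ψI n ⬝ᵥ H.mulVec (ψR n)))
    (IP : ℕ → ℝ)
    (hIP : ∀ n : ℕ, IP n = (2/ℏ) * (((ψR (n+1) + ψR n)/2) ⬝ᵥ Hb.mulVec (gI n)
        - ((ψI (n+1) + ψI n)/2) ⬝ᵥ Hb.mulVec (gR n))) :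
    (∀ n : ℕ, 0 ≤ P n) ∧ (∀ n : ℕ, P (n+1) - P n = -Δt * IP n) := by
  refine ⟨fun n => ?_, fun n => ?_⟩
  · rw [hP n]
    exact FDTDQ.probability_nonneg hℏ hΔt.le hH hd (fun μ hμ => (hCFL μ hμ).le) (ψR n) (ψI n)
  · rw [hP, hP, hIP]
    exact FDTDQ.probability_sub_eq hℏ.ne' (diagonal_transpose d) hH (hUpdA n) (hUpdB n)
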